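/- Let σ be a measurable function on a domain Ω ⊂ ℝ^d (d ≥ 1) satisfying the admissibility assumptions for σ-rearrangements, and let f ∈ L¹(Ω) be nonnegative. If g ∈ L¹(Ω) is nonnegative, equimeasurable with f (i.e. μ_g = μ_f), and of the form g(x) = F(σ(x)) for some nonincreasing function F : ℝ → [0,∞), then g(x) = f^{*σ}(x) for almost every x ∈ Ω. In other words, f^{*σ} is the unique nonnegative L¹(Ω) function that is a nonincreasing function of σ(x) and equimeasurable with f. -/

import Mathlib

open MeasureTheory Set Filter Metric
open scoped ENNReal NNReal

noncomputable section

/-- The distribution function `μ_q(t) = meas {x ∈ Ω : q x > t}` of a function `q` on `Ω`. -/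
def distFun {d : ℕ} (Ω : Set (EuclideanSpace ℝ (Fin d))) (q : EuclideanSpace ℝ (Fin d) → ℝ)
    (t : ℝ) : ℝ≥0∞ :=
  volume {x | x ∈ Ω ∧ t < q x}

/-- The pseudo-inverse `q♯(s) = inf {t ≥ 0 : μ_q(t) ≤ s}` of the distribution function. -/
def pseudoInv {d : ℕ} (Ω : Set (EuclideanSpace ℝ (Fin d))) (q : EuclideanSpace ℝ (Fin d) → ℝ)
    (s : ℝ≥0∞) : ℝ :=
  sInf {t : ℝ | 0 ≤ t ∧ distFun Ω q t ≤ s}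

/-- The Schwarz rearrangement of `q` on `Ω`: `q*(x) = q♯(meas (B(0,|x|) ∩ Ω))`. -/
def schwarzRearr {d : ℕ} (Ω : Set (EuclideanSpace ℝ (Fin d))) (q : EuclideanSpace ℝ (Fin d) → ℝ)
    (x : EuclideanSpace ℝ (Fin d)) : ℝ :=
  pseudoInv Ω q (volume (Metric.ball (0 : EuclideanSpace ℝ (Fin d)) ‖x‖ ∩ Ω))

/-- The Jacobian `a_σ(e) = meas {x ∈ Ω : σ x < e}`, with extended-real argument. -/
def aSig {d : ℕ} (Ω : Set (EuclideanSpace ℝ (Fin d))) (σ : EuclideanSpace ℝ (Fin d) → ℝ)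
    (e : EReal) : ℝ≥0∞ :=
  volume {x | x ∈ Ω ∧ (σ x : EReal) < e}

/-- `e_max = sup {e : a_σ(e) < meas Ω}`. -/
def eMax {d : ℕ} (Ω : Set (EuclideanSpace ℝ (Fin d))) (σ : EuclideanSpace ℝ (Fin d) → ℝ) :
    EReal :=
  sSup {e : EReal | aSig Ω σ e < volume Ω}

/-- `e_min = ess inf σ` on `Ω`. -/
def eMin {d : ℕ} (Ω : Set (EuclideanSpace ℝ (Fin d))) (σ : EuclideanSpace ℝ (Fin d) → ℝ) :
    EReal :=
  essInf (fun x => (σ x : EReal)) (volume.restrict Ω)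

/-- The admissibility assumptions on `σ` from Definition 1. -/
structure SigAdmissible {d : ℕ} (Ω : Set (EuclideanSpace ℝ (Fin d)))
    (σ : EuclideanSpace ℝ (Fin d) → ℝ) : Prop where
  dim_pos : 1 ≤ d
  measurableSet_Ω : MeasurableSet Ω
  measurable_σ : Measurable σ
  exists_lt : ∃ e : ℝ, aSig Ω σ (e : EReal) < volume Ω
  eMin_lt_eMax : eMin Ω σ < eMax Ω σ
  levelSets : ∀ e : ℝ, (e : EReal) < eMax Ω σ → volume {x | x ∈ Ω ∧ σ x = e} = 0
  tendsto_eMax :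
    Tendsto (fun e : ℝ => aSig Ω σ (e : EReal))
      (comap (fun e : ℝ => (e : EReal)) (nhdsWithin (eMax Ω σ) (Iio (eMax Ω σ))))
      (nhds (volume Ω))

/-- The σ-rearrangement `q^{*σ}(x) = q♯(a_σ(σ x)) · 1_{σ x < e_max}`. -/
def sigRearr {d : ℕ} (Ω : Set (EuclideanSpace ℝ (Fin d))) (σ q : EuclideanSpace ℝ (Fin d) → ℝ)
    (x : EuclideanSpace ℝ (Fin d)) : ℝ :=
  if (σ x : EReal) < eMax Ω σ then pseudoInv Ω q (aSig Ω σ (σ x : EReal)) else 0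

end

/-!
Since `g = F ∘ σ` with `F` nonincreasing, `μ_g(F y) ≤ a_σ(y) ≤ μ_g(t)` for every `t < F y`.
Hence `g^♯(a_σ(y)) ≤ F(y)`, and a strict inequality forces `a_σ(y) = μ_g(t)` for some rational
`t > 0`, a finite value because `g` is integrable. As `g^♯ = f^♯` and `f^{*σ} = f^♯ ∘ a_σ ∘ σ` on
all of `Ω`, it remains to see that `{x ∈ Ω : a_σ(σ x) = s}` is null for finite `s`. Between two
points `x, z` of this set the slab `{σ x ≤ σ < σ z}` has measure `a_σ(σ z) - a_σ(σ x) = 0`, and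
countably many such slabs together with at most two level sets of `σ`, null by admissibility,
cover it.
-/

open TopologicalSpace in
theorem MeasureTheory.measure_eq_zero_of_preimage_Ico {X α : Type*} [MeasurableSpace X]
    [TopologicalSpace α] [LinearOrder α] [OrderClosedTopology α] [PseudoMetrizableSpace α]
    [SeparableSpace α] {μ : Measure X} {φ : X → α} {S : Set X}
    (h_fiber : ∀ x ∈ S, μ (S ∩ φ ⁻¹' {φ x}) = 0)
    (h_Ico : ∀ x ∈ S, ∀ z ∈ S, μ (S ∩ φ ⁻¹' Ico (φ x) (φ z)) = 0) : μ S = 0 := by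
  obtain ⟨D, hDS, hDc, hD⟩ :=
    (IsSeparable.of_separableSpace (φ '' S)).exists_countable_dense_subset
  have h_const : ∀ T ⊆ S, (∀ x ∈ T, ∀ y ∈ T, φ x = φ y) → μ T = 0 := by
    intro T hTS hT
    rcases T.eq_empty_or_nonempty with rfl | ⟨x₀, hx₀⟩
    · exact measure_empty
    · refine measure_mono_null (fun x hx => ?_) (h_fiber x₀ (hTS hx₀))
      exact ⟨hTS hx, hT x hx x₀ hx₀⟩
  set L := {x ∈ S | ∀ a ∈ D, φ x ≤ a}
  set U := {x ∈ S | ∀ a ∈ D, a ≤ φ x}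
  -- Since `D` is dense in `φ '' S`, a point below (above) all of `D` is a minimum (maximum).
  have hL : ∀ x ∈ L, ∀ y ∈ S, φ x ≤ φ y := fun x hx y hy =>
    closure_minimal (fun a ha => hx.2 a ha) isClosed_Ici (hD ⟨y, hy, rfl⟩)
  have hU : ∀ x ∈ U, ∀ y ∈ S, φ y ≤ φ x := fun x hx y hy =>
    closure_minimal (fun a ha => hx.2 a ha) isClosed_Iic (hD ⟨y, hy, rfl⟩)
  have hcover : S ⊆ (⋃ a ∈ D, ⋃ b ∈ D, S ∩ φ ⁻¹' Ico a b) ∪ (L ∪ U) := by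
    intro w hw
    by_cases hlow : ∃ a ∈ D, a ≤ φ w
    · by_cases hup : ∃ b ∈ D, φ w < b
      · obtain ⟨a, ha, haw⟩ := hlow
        obtain ⟨b, hb, hwb⟩ := hup
        exact Or.inl (mem_biUnion ha (mem_biUnion hb ⟨hw, haw, hwb⟩))
      · push Not at hup
        exact Or.inr (Or.inr ⟨hw, hup⟩)
    · push Not at hlow
      exact Or.inr (Or.inl ⟨hw, fun a ha => (hlow a ha).le⟩)
  refine measure_mono_null hcover (measure_union_null ?_ (measure_union_null ?_ ?_))
  · refine (measure_biUnion_null_iff hDc).2 fun a ha =>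
      (measure_biUnion_null_iff hDc).2 fun b hb => ?_
    obtain ⟨x, hx, rfl⟩ := hDS ha
    obtain ⟨z, hz, rfl⟩ := hDS hb
    exact h_Ico x hx z hz
  · exact h_const L (fun x hx => hx.1) fun x hx y hy => (hL x hx y hy.1).antisymm (hL y hy x hx.1)
  · exact h_const U (fun x hx => hx.1) fun x hx y hy => (hU y hy x hx.1).antisymm (hU x hx y hy.1)

section SigmaRearrangement

open scoped Topology

variable {d : ℕ} {Ω : Set (EuclideanSpace ℝ (Fin d))} {σ g : EuclideanSpace ℝ (Fin d) → ℝ}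
  {F : ℝ → ℝ}

theorem aSig_coe (Ω : Set (EuclideanSpace ℝ (Fin d))) (σ : EuclideanSpace ℝ (Fin d) → ℝ)
    (y : ℝ) :
    aSig Ω σ y = volume {x | x ∈ Ω ∧ σ x < y} := by
  simp only [aSig, EReal.coe_lt_coe_iff]

theorem aSig_mono (Ω : Set (EuclideanSpace ℝ (Fin d))) (σ : EuclideanSpace ℝ (Fin d) → ℝ) :
    Monotone (aSig Ω σ) := fun _ _ hab =>
  measure_mono fun _ hx => ⟨hx.1, hx.2.trans_le hab⟩

theorem SigAdmissible.bot_lt_eMax (hσ : SigAdmissible Ω σ) : ⊥ < eMax Ω σ :=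
  let ⟨e, he⟩ := hσ.exists_lt
  (EReal.bot_lt_coe e).trans_le (le_sSup he)

theorem SigAdmissible.aSig_eMax (hσ : SigAdmissible Ω σ) : aSig Ω σ (eMax Ω σ) = volume Ω := by
  refine (measure_mono fun x hx => hx.1).antisymm ?_
  have : (𝓝[<] eMax Ω σ).NeBot := nhdsLT_neBot_of_exists_lt ⟨⊥, hσ.bot_lt_eMax⟩
  have hreal : range ((↑) : ℝ → EReal) ∈ 𝓝[<] eMax Ω σ :=
    mem_of_superset (Ioo_mem_nhdsLT hσ.bot_lt_eMax) fun e he =>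
      ⟨e.toReal, EReal.coe_toReal (he.2.trans_le le_top).ne he.1.ne'⟩
  have : (comap ((↑) : ℝ → EReal) (𝓝[<] eMax Ω σ)).NeBot := this.comap_of_range_mem hreal
  refine le_of_tendsto hσ.tendsto_eMax ?_
  filter_upwards [preimage_mem_comap self_mem_nhdsWithin] with e he
  exact aSig_mono Ω σ (le_of_lt he)

theorem SigAdmissible.volume_level_eq_zero (hσ : SigAdmissible Ω σ) {c : ℝ}
    (hc : aSig Ω σ c ≠ ⊤) : volume {x | x ∈ Ω ∧ σ x = c} = 0 := by
  rcases lt_or_ge (c : EReal) (eMax Ω σ) with hlt | hge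
  · exact hσ.levelSets c hlt
  -- Beyond `e_max` only a null part of `Ω` remains once `meas Ω` is finite.
  have hfin : aSig Ω σ (eMax Ω σ) ≠ ⊤ := ne_top_of_le_ne_top hc (aSig_mono Ω σ hge)
  refine measure_mono_null (t := Ω \ {x | x ∈ Ω ∧ (σ x : EReal) < eMax Ω σ}) ?_ ?_
  · rintro x ⟨hxΩ, rfl⟩
    exact ⟨hxΩ, fun hx => (hx.2.trans_le hge).false⟩
  · have hmeas : MeasurableSet {x | x ∈ Ω ∧ (σ x : EReal) < eMax Ω σ} :=
      hσ.measurableSet_Ω.inter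
        (measurableSet_lt (measurable_coe_real_ereal.comp hσ.measurable_σ) measurable_const)
    rw [measure_sdiff (fun x hx => hx.1) hmeas.nullMeasurableSet hfin]
    exact tsub_eq_zero_of_le (hσ.aSig_eMax ▸ le_rfl)

theorem SigAdmissible.volume_preimage_Ico_eq_zero (hσ : SigAdmissible Ω σ) {a b : ℝ}
    (hab : aSig Ω σ b ≤ aSig Ω σ a) (ha : aSig Ω σ a ≠ ⊤) :
    volume {x | x ∈ Ω ∧ σ x ∈ Ico a b} = 0 := by
  rcases lt_or_ge a b with hlt | hge
  · have hmeas : MeasurableSet {x | x ∈ Ω ∧ σ x < a} :=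
      hσ.measurableSet_Ω.inter (hσ.measurable_σ measurableSet_Iio)
    have hsub : {x | x ∈ Ω ∧ σ x ∈ Ico a b} ⊆
        {x | x ∈ Ω ∧ σ x < b} \ {x | x ∈ Ω ∧ σ x < a} :=
      fun x ⟨hxΩ, hax, hxb⟩ => ⟨⟨hxΩ, hxb⟩, fun h => (h.2.trans_le hax).false⟩
    refine measure_mono_null hsub ?_
    simp only [aSig_coe] at hab ha
    have hmono : {x | x ∈ Ω ∧ σ x < a} ⊆ {x | x ∈ Ω ∧ σ x < b} :=
      fun x hx => ⟨hx.1, hx.2.trans hlt⟩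
    rw [measure_sdiff hmono hmeas.nullMeasurableSet ha]
    exact tsub_eq_zero_of_le hab
  · simp [Ico_eq_empty_of_le hge]

theorem SigAdmissible.volume_aSig_level_eq_zero (hσ : SigAdmissible Ω σ) {s : ℝ≥0∞}
    (hs : s ≠ ⊤) :
    volume {x | x ∈ Ω ∧ aSig Ω σ (σ x) = s} = 0 := by
  refine measure_eq_zero_of_preimage_Ico (φ := σ) (fun x hx => ?_) fun x hx z hz => ?_
  · refine measure_mono_null ?_ (hσ.volume_level_eq_zero (c := σ x) (hx.2 ▸ hs))
    exact fun y ⟨⟨hyΩ, _⟩, hy⟩ => ⟨hyΩ, hy⟩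
  · refine measure_mono_null ?_
      (hσ.volume_preimage_Ico_eq_zero (hx.2.trans hz.2.symm).ge (hx.2 ▸ hs))
    exact fun y ⟨⟨hyΩ, _⟩, hy⟩ => ⟨hyΩ, hy⟩

theorem pseudoInv_nonneg (q : EuclideanSpace ℝ (Fin d) → ℝ) (s : ℝ≥0∞) :
    0 ≤ pseudoInv Ω q s :=
  Real.sInf_nonneg fun _ ht => ht.1

theorem pseudoInv_eq_zero_of_volume_le (q : EuclideanSpace ℝ (Fin d) → ℝ) {s : ℝ≥0∞}
    (hs : volume Ω ≤ s) : pseudoInv Ω q s = 0 := by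
  refine le_antisymm ?_ (pseudoInv_nonneg q s)
  exact csInf_le ⟨0, fun _ ht => ht.1⟩ ⟨le_rfl, (measure_mono fun _ hx => hx.1).trans hs⟩

theorem pseudoInv_congr {f : EuclideanSpace ℝ (Fin d) → ℝ}
    (h : ∀ t : ℝ, 0 ≤ t → distFun Ω g t = distFun Ω f t) : pseudoInv Ω g = pseudoInv Ω f := by
  ext s
  unfold pseudoInv
  congr 1
  ext t
  exact and_congr_right fun ht => by rw [h t ht]

-- On `{σ ≥ e_max}` the indicator in `q^{*σ}` is invisible: there `a_σ(σ x) = meas Ω`.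
theorem SigAdmissible.sigRearr_eq (hσ : SigAdmissible Ω σ) (q : EuclideanSpace ℝ (Fin d) → ℝ)
    (x : EuclideanSpace ℝ (Fin d)) : sigRearr Ω σ q x = pseudoInv Ω q (aSig Ω σ (σ x)) := by
  unfold sigRearr
  split_ifs with hx
  · rfl
  · refine (pseudoInv_eq_zero_of_volume_le q ?_).symm
    exact hσ.aSig_eMax ▸ aSig_mono Ω σ (not_lt.1 hx)

theorem distFun_anti (q : EuclideanSpace ℝ (Fin d) → ℝ) : Antitone (distFun Ω q) :=
  fun _ _ hst => measure_mono fun _ hx => ⟨hx.1, hst.trans_lt hx.2⟩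

theorem distFun_ne_top (hg : IntegrableOn g Ω) {t : ℝ} (ht : 0 < t) : distFun Ω g t ≠ ⊤ := by
  refine ne_top_of_le_ne_top (hg.measure_norm_gt_lt_top ht).ne ?_
  refine (measure_mono fun x hx => ?_).trans (Measure.le_restrict_apply _ _)
  exact ⟨hx.2.trans_le (le_abs_self _), hx.1⟩

theorem distFun_le_aSig (hgF : ∀ x ∈ Ω, g x = F (σ x)) (hF : Antitone F) (y : ℝ) :
    distFun Ω g (F y) ≤ aSig Ω σ y := by
  rw [aSig_coe]
  refine measure_mono fun x ⟨hxΩ, hx⟩ => ⟨hxΩ, ?_⟩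
  by_contra! hyx
  exact (hF hyx).not_gt (hgF x hxΩ ▸ hx)

theorem aSig_le_distFun (hgF : ∀ x ∈ Ω, g x = F (σ x)) (hF : Antitone F)
    {t y : ℝ} (ht : t < F y) : aSig Ω σ y ≤ distFun Ω g t := by
  rw [aSig_coe]
  exact measure_mono fun x ⟨hxΩ, hx⟩ => ⟨hxΩ, hgF x hxΩ ▸ ht.trans_le (hF hx.le)⟩

theorem pseudoInv_aSig_le (hgF : ∀ x ∈ Ω, g x = F (σ x)) (hF : Antitone F)
    {y : ℝ} (hy : 0 ≤ F y) : pseudoInv Ω g (aSig Ω σ y) ≤ F y :=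
  csInf_le ⟨0, fun _ ht => ht.1⟩ ⟨hy, distFun_le_aSig hgF hF y⟩

theorem distFun_eq_aSig (hgF : ∀ x ∈ Ω, g x = F (σ x)) (hF : Antitone F)
    {t y : ℝ} (hy : 0 ≤ F y) (hlt : pseudoInv Ω g (aSig Ω σ y) < t)
    (ht : t < F y) : distFun Ω g t = aSig Ω σ y := by
  obtain ⟨t', ht', ht't⟩ := exists_lt_of_csInf_lt
    (s := {t | 0 ≤ t ∧ distFun Ω g t ≤ aSig Ω σ y}) ⟨F y, hy, distFun_le_aSig hgF hF y⟩ hlt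
  exact ((distFun_anti g ht't.le).trans ht'.2).antisymm (aSig_le_distFun hgF hF ht)

end SigmaRearrangement

theorem sigmaRearr_unique_general {d : ℕ} (Ω : Set (EuclideanSpace ℝ (Fin d)))
    (σ : EuclideanSpace ℝ (Fin d) → ℝ) (hσ : SigAdmissible Ω σ)
    (f : EuclideanSpace ℝ (Fin d) → ℝ)
    (g : EuclideanSpace ℝ (Fin d) → ℝ)
    (hg_int : MeasureTheory.IntegrableOn g Ω)
    (F : ℝ → ℝ) (hF_anti : Antitone F) (hF_nonneg : ∀ y : ℝ, 0 ≤ F y)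
    (hgF : ∀ x ∈ Ω, g x = F (σ x))
    (h_equi : ∀ t : ℝ, 0 ≤ t → distFun Ω g t = distFun Ω f t) :
    ∀ᵐ x ∂(volume.restrict Ω), g x = sigRearr Ω σ f x := by
  rw [ae_restrict_iff' hσ.measurableSet_Ω]
  have h_level : ∀ q : ℚ, ∀ᵐ x, 0 < (q : ℝ) → x ∈ Ω → aSig Ω σ (σ x) ≠ distFun Ω g q := by
    intro q
    by_cases hq : 0 < (q : ℝ)
    · filter_upwards [measure_eq_zero_iff_ae_notMem.1
        (hσ.volume_aSig_level_eq_zero (distFun_ne_top hg_int hq))] with x hx _ hxΩ heq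
      exact hx ⟨hxΩ, heq⟩
    · exact Eventually.of_forall fun x h => absurd h hq
  filter_upwards [ae_all_iff.2 h_level] with x hx hxΩ
  rw [hσ.sigRearr_eq, ← pseudoInv_congr h_equi, hgF x hxΩ]
  refine (pseudoInv_aSig_le hgF hF_anti (hF_nonneg _)).antisymm' (not_lt.1 fun hlt => ?_)
  obtain ⟨q, hq₁, hq₂⟩ := exists_rat_btwn hlt
  exact hx q ((pseudoInv_nonneg g _).trans_lt hq₁) hxΩ
    (distFun_eq_aSig hgF hF_anti (hF_nonneg _) hq₁ hq₂).symm

/-- `f^{*σ}` is the unique nonnegative `L¹(Ω)` function that is a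
nonincreasing function of `σ(x)` and equimeasurable with `f`: any such `g` coincides
a.e. on `Ω` with `f^{*σ}`. -/
theorem sigmaRearr_unique {d : ℕ} (Ω : Set (EuclideanSpace ℝ (Fin d)))
    (σ : EuclideanSpace ℝ (Fin d) → ℝ) (hσ : SigAdmissible Ω σ)
    (f : EuclideanSpace ℝ (Fin d) → ℝ) (hf_nonneg : ∀ x ∈ Ω, 0 ≤ f x)
    (hf_int : MeasureTheory.IntegrableOn f Ω)
    (g : EuclideanSpace ℝ (Fin d) → ℝ) (hg_nonneg : ∀ x ∈ Ω, 0 ≤ g x)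
    (hg_int : MeasureTheory.IntegrableOn g Ω)
    (F : ℝ → ℝ) (hF_anti : Antitone F) (hF_nonneg : ∀ y : ℝ, 0 ≤ F y)
    (hgF : ∀ x ∈ Ω, g x = F (σ x))
    (h_equi : ∀ t : ℝ, 0 ≤ t → distFun Ω g t = distFun Ω f t) :
    ∀ᵐ x ∂(volume.restrict Ω), g x = sigRearr Ω σ f x :=
  sigmaRearr_unique_general Ω σ hσ f g hg_int F hF_anti hF_nonneg hgF h_equi
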